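/- arXiv:0710.1920 — 8 statements merged into one kernel-verified Lean document; each statement's English description precedes it below -/
import Mathlib

section
/- Let M, K be n×n Hermitian positive definite complex matrices. If the matrix equation (M⁻¹ + K)⁻¹ = (E⁻¹ + K)⁻¹ + λI holds for Hermitian positive definite E and nonzero real λ, then (E⁻¹ − M⁻¹)/λ is positive definite; in particular M ≻ E if λ > 0 and M ≺ E if λ < 0. -/
open Matrix
open scoped ComplexOrder

/-!
Put `A = M⁻¹ + K` and `B = E⁻¹ + K`, both positive definite. The hypothesis says
`A⁻¹ - B⁻¹ = λ • 1`, so `λ⁻¹ • (A⁻¹ - B⁻¹) = 1` is positive definite. Inversion reverses the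
strict Loewner order on positive definite matrices, because for `D = A - B`
`B⁻¹ - A⁻¹ = A⁻¹ᴴ (D + D B⁻¹ D) A⁻¹` is a congruence of a positive definite matrix. Hence
`λ⁻¹ • (B - A) = λ⁻¹ • (E⁻¹ - M⁻¹)` is positive definite, and reversing once more gives the
same for `λ⁻¹ • (M - E)`.
-/

namespace Matrix

variable {𝕜 n : Type*} [RCLike 𝕜] {A B : Matrix n n 𝕜}

theorem posDef_smul_iff {c : ℝ} (hc : 0 < c) : (c • A).PosDef ↔ A.PosDef := by
  refine ⟨fun h => ?_, fun h => h.smul hc⟩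
  simpa [smul_smul, hc.ne'] using h.smul (inv_pos.mpr hc)

variable [Fintype n] [DecidableEq n]

theorem PosDef.inv_inv (hA : A.PosDef) : A⁻¹⁻¹ = A :=
  A.nonsing_inv_nonsing_inv ((isUnit_iff_isUnit_det A).mp hA.isUnit)

theorem PosDef.inv_sub_inv_of_sub (hA : A.PosDef) (hB : B.PosDef) (hAB : (A - B).PosDef) :
    (B⁻¹ - A⁻¹).PosDef := by
  have hAu := (isUnit_iff_isUnit_det A).mp hA.isUnit
  have hBu := (isUnit_iff_isUnit_det B).mp hB.isUnit
  set D := A - B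
  have hcongr : (A⁻¹ᴴ * (D + D * B⁻¹ * D) * A⁻¹).PosDef := by
    refine PosDef.conjTranspose_mul_mul_same ?_ (mulVec_injective_of_isUnit hA.inv.isUnit)
    simpa [hAB.1.eq, Matrix.mul_assoc] using
      hAB.add (hB.inv.conjTranspose_mul_mul_same (mulVec_injective_of_isUnit hAB.isUnit))
  convert hcongr using 1
  calc B⁻¹ - A⁻¹ = A⁻¹ * D * B⁻¹ := by
        rw [Matrix.mul_sub, Matrix.sub_mul, A.nonsing_inv_mul hAu, Matrix.mul_assoc A⁻¹ B,
          B.mul_nonsing_inv hBu, Matrix.one_mul, Matrix.mul_one]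
    _ = A⁻¹ * (D * B⁻¹ * (B + D)) * A⁻¹ := by
        simp [D, Matrix.mul_assoc, A.mul_nonsing_inv hAu]
    _ = A⁻¹ᴴ * (D + D * B⁻¹ * D) * A⁻¹ := by
        simp [hA.inv.1.eq, Matrix.mul_add, Matrix.mul_assoc, B.nonsing_inv_mul hBu]

theorem PosDef.smul_sub_of_smul_inv_sub_inv (hA : A.PosDef) (hB : B.PosDef) {c : ℝ}
    (h : (c • (A⁻¹ - B⁻¹)).PosDef) : (c • (B - A)).PosDef := by
  rcases lt_trichotomy c 0 with hc | rfl | hc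
  · rw [← neg_smul_neg, neg_sub] at h ⊢
    have := hB.inv.inv_sub_inv_of_sub hA.inv ((posDef_smul_iff (neg_pos.mpr hc)).mp h)
    rw [hA.inv_inv, hB.inv_inv] at this
    exact (posDef_smul_iff (neg_pos.mpr hc)).mpr this
  · simpa using h
  · have := hA.inv.inv_sub_inv_of_sub hB.inv ((posDef_smul_iff hc).mp h)
    rw [hA.inv_inv, hB.inv_inv] at this
    exact (posDef_smul_iff hc).mpr this

end Matrix

/-- Let M, K be n×n Hermitian positive definite complex matrices. If
(M⁻¹ + K)⁻¹ = (E⁻¹ + K)⁻¹ + λI holds for Hermitian positive definite E and nonzero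
real λ, then (E⁻¹ − M⁻¹)/λ is positive definite; in particular M ≻ E if λ > 0 and
M ≺ E if λ < 0. -/
theorem stmt_2 {n : ℕ} (M E K : Matrix (Fin n) (Fin n) ℂ) (l : ℝ)
    (hM : M.PosDef) (hE : E.PosDef) (hK : K.PosDef) (hl : l ≠ 0)
    (heq : (M⁻¹ + K)⁻¹ = (E⁻¹ + K)⁻¹ + (l : ℂ) • (1 : Matrix (Fin n) (Fin n) ℂ)) :
    (((l : ℂ)⁻¹) • (E⁻¹ - M⁻¹)).PosDef ∧
      (0 < l → (M - E).PosDef) ∧ (l < 0 → (E - M).PosDef) := by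
  have hA := hM.inv.add hK
  have hB := hE.inv.add hK
  have hAB : (l⁻¹ • ((M⁻¹ + K)⁻¹ - (E⁻¹ + K)⁻¹)).PosDef := by
    rw [heq, add_sub_cancel_left, ← Complex.coe_algebraMap, algebraMap_smul, smul_smul,
      inv_mul_cancel₀ hl, one_smul]
    exact .one
  have hEM : (l⁻¹ • (E⁻¹ - M⁻¹)).PosDef := by
    simpa only [add_sub_add_right_eq_sub] using hA.smul_sub_of_smul_inv_sub_inv hB hAB
  have hME := hE.smul_sub_of_smul_inv_sub_inv hM hEM
  refine ⟨?_, fun hpos => ?_, fun hneg => ?_⟩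
  · rwa [← Complex.ofReal_inv, ← Complex.coe_algebraMap, algebraMap_smul]
  · exact (posDef_smul_iff (inv_pos.mpr hpos)).mp hME
  · rw [← neg_smul_neg, neg_sub] at hME
    exact (posDef_smul_iff (neg_pos.mpr (inv_lt_zero.mpr hneg))).mp hME
end

section
/- Let H_M be n_M×n and H_E be n_E×n complex matrices with H_M*H_M and H_E*H_E positive definite, and suppose H_M*H_M ≻ H_E*H_E. Then for A* = H_E(H_M*H_M)⁻¹H_M*, the matrix I − AA* = I − H_M(H_M*H_M)⁻¹H_E*H_E(H_M*H_M)⁻¹H_M* is positive definite. -/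
/-!
With `G = H_Mᴴ H_M` and `C = G⁻¹ H_Mᴴ`, one has `Cᴴ G C = H_M C`, hence
`I − AAᴴ = (I − H_M C) + Cᴴ (G − H_Eᴴ H_E) C`.
Here `H_M C` is the orthogonal projection onto the range of `H_M`, so the first summand is
positive semidefinite, and the second is positive semidefinite since `G − H_Eᴴ H_E ≻ 0`.
A vector annihilated by the second form satisfies `C x = 0`, so `H_M C x = 0` and the first
form at `x` is `‖x‖²`.
-/

open Matrix
open scoped ComplexOrder MatrixOrder

namespace Matrix

variable {m n 𝕜 : Type*} [Fintype m] [Fintype n] [RCLike 𝕜]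

lemma isStarProjection_mul_inv_mul_conjTranspose [DecidableEq m] [DecidableEq n]
    (H : Matrix m n 𝕜) (hH : IsUnit (Hᴴ * H)) : IsStarProjection (H * (Hᴴ * H)⁻¹ * Hᴴ) where
  isIdempotentElem := by
    rw [IsIdempotentElem, show H * (Hᴴ * H)⁻¹ * Hᴴ * (H * (Hᴴ * H)⁻¹ * Hᴴ)
      = H * ((Hᴴ * H)⁻¹ * (Hᴴ * H) * (Hᴴ * H)⁻¹) * Hᴴ by simp only [Matrix.mul_assoc],
      nonsing_inv_mul _ ((isUnit_iff_isUnit_det _).mp hH), Matrix.one_mul]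
  isSelfAdjoint := by
    simp [IsSelfAdjoint, star_eq_conjTranspose, conjTranspose_nonsing_inv, Matrix.mul_assoc]

lemma PosSemidef.posDef_add_conjTranspose_mul_mul {A : Matrix n n 𝕜} {Q : Matrix m m 𝕜}
    (hA : A.PosSemidef) (hQ : Q.PosDef) (C : Matrix m n 𝕜)
    (hker : ∀ x ≠ 0, C *ᵥ x = 0 → 0 < star x ⬝ᵥ A *ᵥ x) : (A + Cᴴ * Q * C).PosDef := by
  refine posDef_iff_dotProduct_mulVec.mpr
    ⟨hA.isHermitian.add (isHermitian_conjTranspose_mul_mul C hQ.isHermitian), fun x hx => ?_⟩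
  have hQC : star x ⬝ᵥ (Cᴴ * Q * C) *ᵥ x = star (C *ᵥ x) ⬝ᵥ Q *ᵥ (C *ᵥ x) := by
    simp only [star_mulVec, dotProduct_mulVec, vecMul_vecMul, ← mulVec_mulVec]
  rw [add_mulVec, dotProduct_add, hQC]
  by_cases hCx : C *ᵥ x = 0
  · simpa [hCx] using hker x hx hCx
  · exact add_pos_of_nonneg_of_pos (hA.dotProduct_mulVec_nonneg x) (hQ.dotProduct_mulVec_pos hCx)

end Matrix

theorem stmt_4_general {n nM nE : ℕ}
    (HM : Matrix (Fin nM) (Fin n) ℂ) (HE : Matrix (Fin nE) (Fin n) ℂ)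
    (hM : (HMᴴ * HM).PosDef)
    (hME : (HMᴴ * HM - HEᴴ * HE).PosDef) :
    ((1 : Matrix (Fin nM) (Fin nM) ℂ) -
        HM * (HMᴴ * HM)⁻¹ * HEᴴ * HE * (HMᴴ * HM)⁻¹ * HMᴴ).PosDef := by
  set G := HMᴴ * HM
  set C := G⁻¹ * HMᴴ
  have hGinv : G * G⁻¹ = 1 := mul_nonsing_inv G ((isUnit_iff_isUnit_det G).mp hM.isUnit)
  have hC : Cᴴ = HM * G⁻¹ := by
    rw [conjTranspose_mul, conjTranspose_conjTranspose, hM.isHermitian.inv.eq]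
  have hdecomp : 1 - HM * G⁻¹ * HEᴴ * HE * G⁻¹ * HMᴴ
      = (1 - HM * G⁻¹ * HMᴴ) + Cᴴ * (G - HEᴴ * HE) * C := by
    rw [hC, Matrix.mul_sub, Matrix.sub_mul]
    simp only [C, Matrix.mul_assoc]
    rw [← Matrix.mul_assoc G, hGinv, Matrix.one_mul]
    abel
  rw [hdecomp]
  refine ((isStarProjection_mul_inv_mul_conjTranspose HM hM.isUnit).one_sub_nonneg.posSemidef
    ).posDef_add_conjTranspose_mul_mul hME C fun x hx hCx => ?_
  have hPx : (HM * G⁻¹ * HMᴴ) *ᵥ x = 0 := by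
    rw [Matrix.mul_assoc, ← mulVec_mulVec, hCx, mulVec_zero]
  rw [sub_mulVec, hPx, sub_zero, one_mulVec]
  exact dotProduct_star_self_pos_iff.mpr hx

/-- Let H_M be n_M×n and H_E be n_E×n complex matrices with H_M*H_M and H_E*H_E
positive definite, and H_M*H_M ≻ H_E*H_E. Then for A* = H_E(H_M*H_M)⁻¹H_M*
(i.e. A = H_M(H_M*H_M)⁻¹H_E*), the matrix
I − AA* = I − H_M(H_M*H_M)⁻¹H_E*H_E(H_M*H_M)⁻¹H_M* is positive definite. -/
theorem stmt_4 {n nM nE : ℕ}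
    (HM : Matrix (Fin nM) (Fin n) ℂ) (HE : Matrix (Fin nE) (Fin n) ℂ)
    (hM : (HMᴴ * HM).PosDef) (hE : (HEᴴ * HE).PosDef)
    (hME : (HMᴴ * HM - HEᴴ * HE).PosDef) :
    ((1 : Matrix (Fin nM) (Fin nM) ℂ) -
        HM * (HMᴴ * HM)⁻¹ * HEᴴ * HE * (HMᴴ * HM)⁻¹ * HMᴴ).PosDef :=
  stmt_4_general HM HE hM hME
end

section
/- Let H_M, H_E be complex matrices with H_M*H_M ≻ 0, H_E*H_E ≻ 0, and H_M*H_M ≻ H_E*H_E. With A* = H_E(H_M*H_M)⁻¹H_M*, it holds that (H_M* − H_E*A*)(I − AA*)⁻¹(H_M − AH_E) + H_E*H_E = H_M*H_M. -/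
open Matrix
open scoped ComplexOrder

/-- With H_M*H_M ≻ 0, H_E*H_E ≻ 0, H_M*H_M ≻ H_E*H_E, and A* = H_E(H_M*H_M)⁻¹H_M*
(so A = H_M(H_M*H_M)⁻¹H_E*), it holds that
(H_M* − H_E*A*)(I − AA*)⁻¹(H_M − AH_E) + H_E*H_E = H_M*H_M. -/
theorem stmt_5 {n nM nE : ℕ}
    (HM : Matrix (Fin nM) (Fin n) ℂ) (HE : Matrix (Fin nE) (Fin n) ℂ)
    (hM : (HMᴴ * HM).PosDef) (hE : (HEᴴ * HE).PosDef)
    (hME : (HMᴴ * HM - HEᴴ * HE).PosDef)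
    (A : Matrix (Fin nM) (Fin nE) ℂ) (hA : Aᴴ = HE * (HMᴴ * HM)⁻¹ * HMᴴ) :
    (HMᴴ - HEᴴ * Aᴴ) * ((1 : Matrix (Fin nM) (Fin nM) ℂ) - A * Aᴴ)⁻¹ * (HM - A * HE)
      + HEᴴ * HE = HMᴴ * HM := by
  set G := HMᴴ * HM with hGdef
  set E := HEᴴ * HE with hEdef
  set D := G - E with hDdef
  have hGu : IsUnit G.det := (isUnit_iff_isUnit_det _).mp hM.isUnit
  have hDu : IsUnit D.det := (isUnit_iff_isUnit_det _).mp hME.isUnit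
  have h1 : G⁻¹ * G = 1 := nonsing_inv_mul _ hGu
  have h2 : G * G⁻¹ = 1 := mul_nonsing_inv _ hGu
  have h3 : D⁻¹ * D = 1 := nonsing_inv_mul _ hDu
  have h4 : D * D⁻¹ = 1 := mul_nonsing_inv _ hDu
  have hGH : Gᴴ = G := by rw [hGdef, conjTranspose_mul, conjTranspose_conjTranspose]
  have hGiH : (G⁻¹)ᴴ = G⁻¹ := by rw [conjTranspose_nonsing_inv, hGH]
  have hAeq : A = HM * G⁻¹ * HEᴴ := by
    have := congrArg conjTranspose hA
    simpa [conjTranspose_mul, hGiH, Matrix.mul_assoc] using this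
  -- A * HE = HM * G⁻¹ * E
  have hAHE : A * HE = HM * G⁻¹ * E := by
    rw [hAeq, hEdef]; simp [Matrix.mul_assoc]
  have hHEA : HEᴴ * Aᴴ = E * G⁻¹ * HMᴴ := by
    rw [hA, hEdef]; simp [Matrix.mul_assoc]
  have hAA : A * Aᴴ = HM * G⁻¹ * E * G⁻¹ * HMᴴ := by
    rw [hAeq]; simp [conjTranspose_mul, hGiH, hEdef, Matrix.mul_assoc]
  set X : Matrix (Fin nM) (Fin nM) ℂ := 1 + HM * D⁻¹ * E * G⁻¹ * HMᴴ with hXdef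
  have hGDE : G = D + E := by rw [hDdef]; abel
  -- key cancellation : G⁻¹ * HMᴴ * HM = 1
  have hc : G⁻¹ * (HMᴴ * HM) = 1 := by rw [← hGdef, h1]
  have hBX : ((1 : Matrix (Fin nM) (Fin nM) ℂ) - A * Aᴴ) * X = 1 := by
    rw [hAA, hXdef]
    have e1 : HM * G⁻¹ * E * G⁻¹ * HMᴴ * (HM * D⁻¹ * E * G⁻¹ * HMᴴ)
        = HM * G⁻¹ * (E * D⁻¹ * E) * G⁻¹ * HMᴴ := by
      calc HM * G⁻¹ * E * G⁻¹ * HMᴴ * (HM * D⁻¹ * E * G⁻¹ * HMᴴ)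
          = HM * G⁻¹ * E * (G⁻¹ * (HMᴴ * HM)) * (D⁻¹ * E * G⁻¹ * HMᴴ) := by
            simp [Matrix.mul_assoc]
        _ = _ := by rw [hc]; simp [Matrix.mul_assoc]
    have e2 : E * D⁻¹ * E = G * D⁻¹ * E - E := by
      have : (G - E) * D⁻¹ * E = E := by rw [← hDdef, h4]; simp
      rw [Matrix.sub_mul, Matrix.sub_mul] at this
      linear_combination (norm := noncomm_ring) -this
    have e3 : HM * G⁻¹ * (G * D⁻¹ * E) * G⁻¹ * HMᴴ = HM * D⁻¹ * E * G⁻¹ * HMᴴ := by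
      calc HM * G⁻¹ * (G * D⁻¹ * E) * G⁻¹ * HMᴴ
          = HM * (G⁻¹ * G) * (D⁻¹ * E * G⁻¹ * HMᴴ) := by simp [Matrix.mul_assoc]
        _ = _ := by rw [h1]; simp [Matrix.mul_assoc]
    rw [Matrix.sub_mul, Matrix.mul_add, Matrix.mul_add, e1, e2]
    rw [Matrix.mul_sub, Matrix.sub_mul, Matrix.sub_mul, e3]
    simp
  have hinv : ((1 : Matrix (Fin nM) (Fin nM) ℂ) - A * Aᴴ)⁻¹ = X := inv_eq_right_inv hBX
  rw [hinv, hHEA, hAHE]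
  -- HM - HM*G⁻¹*E = HM*G⁻¹*D,  HMᴴ - E*G⁻¹*HMᴴ = D*G⁻¹*HMᴴ
  have r1 : HM - HM * G⁻¹ * E = HM * G⁻¹ * D := by
    rw [hDdef, Matrix.mul_sub]
    have : HM * G⁻¹ * G = HM := by rw [Matrix.mul_assoc, h1]; simp
    rw [this]
  have r2 : HMᴴ - E * G⁻¹ * HMᴴ = D * G⁻¹ * HMᴴ := by
    rw [hDdef, Matrix.sub_mul, Matrix.sub_mul]
    have : G * G⁻¹ * HMᴴ = HMᴴ := by rw [h2]; simp
    rw [this]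
  rw [r1, r2, hXdef]
  have key : (1 + HM * D⁻¹ * E * G⁻¹ * HMᴴ) * (HM * G⁻¹ * D) = HM := by
    rw [Matrix.add_mul, Matrix.one_mul]
    have : HM * D⁻¹ * E * G⁻¹ * HMᴴ * (HM * G⁻¹ * D)
        = HM * D⁻¹ * E * G⁻¹ * D := by
      calc HM * D⁻¹ * E * G⁻¹ * HMᴴ * (HM * G⁻¹ * D)
          = HM * D⁻¹ * E * (G⁻¹ * (HMᴴ * HM)) * (G⁻¹ * D) := by simp [Matrix.mul_assoc]
        _ = _ := by rw [hc]; simp [Matrix.mul_assoc]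
    rw [this]
    have : HM * G⁻¹ * D + HM * D⁻¹ * E * G⁻¹ * D
        = HM * D⁻¹ * (D + E) * G⁻¹ * D := by
      rw [Matrix.mul_add, Matrix.add_mul, Matrix.add_mul]
      have h5 : HM * D⁻¹ * D = HM := by rw [Matrix.mul_assoc, h3]; simp
      rw [h5]
    rw [this, ← hGDE]
    calc HM * D⁻¹ * G * G⁻¹ * D = HM * D⁻¹ * (G * G⁻¹) * D := by simp [Matrix.mul_assoc]
      _ = HM := by rw [h2]; simp [Matrix.mul_assoc, h3]
  calc D * G⁻¹ * HMᴴ * (1 + HM * D⁻¹ * E * G⁻¹ * HMᴴ) * (HM * G⁻¹ * D) + E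
      = D * G⁻¹ * HMᴴ * ((1 + HM * D⁻¹ * E * G⁻¹ * HMᴴ) * (HM * G⁻¹ * D)) + E := by
        simp [Matrix.mul_assoc]
    _ = D * (G⁻¹ * (HMᴴ * HM)) + E := by rw [key]; simp [Matrix.mul_assoc]
    _ = G := by rw [hc, Matrix.mul_one]; exact hGDE.symm
end

section
/- With A* = H_E(H_M*H_M)⁻¹H_M* and H_M*H_M ≻ H_E*H_E ≻ 0, it holds that H_M*(I − AA*)⁻¹H_M = H_M*H_M + ((H_E*H_E)⁻¹ − (H_M*H_M)⁻¹)⁻¹. -/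
open Matrix
open scoped ComplexOrder

private lemma ring_key {R : Type*} [Ring R] (m e g mi : R)
    (h1 : mi * m = 1) (h2 : g * (m - e) = 1) (h3 : (m - e) * g = 1) :
    g * e * mi - mi * e * mi - mi * e * mi * m * (g * e * mi) = 0 := by
  have h4 : mi * e * mi * m = mi * e := by
    rw [mul_assoc, h1, mul_one]
  rw [h4]
  have h5 : g * e - mi * e - mi * e * (g * e) = 0 := by
    have : g * e - mi * e - mi * e * (g * e) = (1 - mi * e) * (g * e) - mi * e := by
      noncomm_ring
    rw [this]
    have h6 : (1 : R) - mi * e = mi * (m - e) := by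
      rw [mul_sub, h1]
    rw [h6, mul_assoc, ← mul_assoc (m - e), h3, one_mul, sub_self]
  calc g * e * mi - mi * e * mi - mi * e * (g * e * mi)
      = (g * e - mi * e - mi * e * (g * e)) * mi := by noncomm_ring
    _ = 0 := by rw [h5, zero_mul]

private lemma ring_rhs {R : Type*} [Ring R] (m e g mi ei : R)
    (h0 : m * mi = 1) (h1 : mi * m = 1) (hE : ei * e = 1) (hE' : e * ei = 1)
    (h3 : (m - e) * g = 1) :
    (ei - mi) * (m * g * e) = 1 := by
  have hdiff : ei - mi = ei * (m - e) * mi := by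
    have h4 : ei * (m - e) * mi = ei * (m * mi) - (ei * e) * mi := by noncomm_ring
    rw [h4, h0, mul_one, hE, one_mul]
  rw [hdiff]
  calc ei * (m - e) * mi * (m * g * e)
      = ei * ((m - e) * (mi * m) * g) * e := by noncomm_ring
    _ = 1 := by rw [h1, mul_one, h3, mul_one, hE]

private lemma mat_expand {a b : Type*} [Fintype a] [Fintype b] [DecidableEq a]
    (P : Matrix a b ℂ) (Q : Matrix b a ℂ) (X Y : Matrix b b ℂ) :
    (1 - P * X * Q) * (1 + P * Y * Q)
      = 1 + P * (Y - X - X * (Q * P) * Y) * Q := by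
  simp only [Matrix.mul_add, Matrix.add_mul, Matrix.sub_mul, Matrix.mul_sub,
    Matrix.one_mul, Matrix.mul_one, Matrix.mul_assoc]
  abel

private lemma mat_expand2 {a b : Type*} [Fintype a] [Fintype b] [DecidableEq a]
    (P : Matrix a b ℂ) (Q : Matrix b a ℂ) (Y : Matrix b b ℂ) :
    Q * (1 + P * Y * Q) * P = Q * P + (Q * P) * Y * (Q * P) := by
  simp only [Matrix.mul_add, Matrix.add_mul, Matrix.one_mul, Matrix.mul_one,
    Matrix.mul_assoc]

/-- With A* = H_E(H_M*H_M)⁻¹H_M* (so A = H_M(H_M*H_M)⁻¹H_E*) and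
H_M*H_M ≻ H_E*H_E ≻ 0, it holds that
H_M*(I − AA*)⁻¹H_M = H_M*H_M + ((H_E*H_E)⁻¹ − (H_M*H_M)⁻¹)⁻¹. -/
theorem stmt_10 {n nM nE : ℕ}
    (HM : Matrix (Fin nM) (Fin n) ℂ) (HE : Matrix (Fin nE) (Fin n) ℂ)
    (hM : (HMᴴ * HM).PosDef) (hE : (HEᴴ * HE).PosDef)
    (hME : (HMᴴ * HM - HEᴴ * HE).PosDef)
    (A : Matrix (Fin nM) (Fin nE) ℂ) (hA : Aᴴ = HE * (HMᴴ * HM)⁻¹ * HMᴴ) :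
    HMᴴ * ((1 : Matrix (Fin nM) (Fin nM) ℂ) - A * Aᴴ)⁻¹ * HM
      = HMᴴ * HM + ((HEᴴ * HE)⁻¹ - (HMᴴ * HM)⁻¹)⁻¹ := by
  set M : Matrix (Fin n) (Fin n) ℂ := HMᴴ * HM with hMdef
  set E : Matrix (Fin n) (Fin n) ℂ := HEᴴ * HE with hEdef
  haveI := hM.isUnit.invertible
  haveI := hE.isUnit.invertible
  haveI := hME.isUnit.invertible
  set G : Matrix (Fin n) (Fin n) ℂ := (M - E)⁻¹ with hGdef
  have hMM : M * M⁻¹ = 1 := mul_inv_of_invertible M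
  have hMM' : M⁻¹ * M = 1 := inv_mul_of_invertible M
  have hEE : E * E⁻¹ = 1 := mul_inv_of_invertible E
  have hEE' : E⁻¹ * E = 1 := inv_mul_of_invertible E
  have hGG : (M - E) * G = 1 := mul_inv_of_invertible (M - E)
  have hGG' : G * (M - E) = 1 := inv_mul_of_invertible (M - E)
  have hMinvH : (M⁻¹)ᴴ = M⁻¹ := by
    rw [Matrix.conjTranspose_nonsing_inv, hM.1]
  have hAval : A = HM * M⁻¹ * HEᴴ := by
    calc A = Aᴴᴴ := by simp
    _ = (HE * M⁻¹ * HMᴴ)ᴴ := by rw [hA]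
    _ = HM * M⁻¹ * HEᴴ := by
        simp [Matrix.conjTranspose_mul, hMinvH, Matrix.mul_assoc]
  have hAAH : A * Aᴴ = HM * (M⁻¹ * E * M⁻¹) * HMᴴ := by
    rw [hA, hAval, hEdef]
    simp only [Matrix.mul_assoc]
  -- explicit inverse of 1 - A*Aᴴ
  have hinv : ((1 : Matrix (Fin nM) (Fin nM) ℂ) - A * Aᴴ)⁻¹
      = 1 + HM * (G * E * M⁻¹) * HMᴴ := by
    apply Matrix.inv_eq_right_inv
    rw [hAAH, mat_expand HM HMᴴ (M⁻¹ * E * M⁻¹) (G * E * M⁻¹), ← hMdef,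
      ring_key M E G M⁻¹ hMM' hGG' hGG, Matrix.mul_zero, Matrix.zero_mul, add_zero]
  have hrhs : (E⁻¹ - M⁻¹)⁻¹ = M * G * E :=
    Matrix.inv_eq_right_inv (ring_rhs M E G M⁻¹ E⁻¹ hMM hMM' hEE' hEE hGG)
  rw [hinv, hrhs, mat_expand2 HM HMᴴ (G * E * M⁻¹), ← hMdef]
  congr 1
  calc M * (G * E * M⁻¹) * M = M * G * E * (M⁻¹ * M) := by
        simp only [Matrix.mul_assoc]
    _ = M * G * E := by rw [hMM', Matrix.mul_one]
end

section
/- With M as the Riccati block matrix above and H_E*H_E ≻ 0, for every n_E×n_M matrix U₁ the columns of the block vector (U₁; H_E(H_E*H_E)⁻¹H_M*U₁) lie in the kernel of M + I. -/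
open Matrix
open scoped ComplexOrder

namespace Matrix

variable {m n p q R : Type*} [Fintype m] [Fintype n] [Fintype p]
  [DecidableEq m] [DecidableEq p] [CommRing R] [Star R]

noncomputable def riccatiBlock (HM : Matrix m n R) (HE : Matrix p n R) (KX : Matrix n n R) :
    Matrix (m ⊕ p) (m ⊕ p) R :=
  fromBlocks
    (-(HM * KX * HMᴴ + 1)⁻¹)
    (-(HM * KX * HMᴴ + 1)⁻¹ * (HM * KX * HEᴴ))
    (HE * KX * HMᴴ * (HM * KX * HMᴴ + 1)⁻¹)
    (-(HE * KX * HEᴴ) - 1 + HE * KX * HMᴴ * (HM * KX * HMᴴ + 1)⁻¹ * (HM * KX * HEᴴ))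

/-- `M + 1` sees a block vector `(U; V)` only through `H_Mᴴ U - H_Eᴴ V`. -/
theorem riccatiBlock_add_one_mul_fromRows_eq_zero {HM : Matrix m n R} {HE : Matrix p n R}
    {KX : Matrix n n R} (hA : IsUnit (HM * KX * HMᴴ + 1)) {U : Matrix m q R}
    {V : Matrix p q R} (hUV : HEᴴ * V = HMᴴ * U) :
    (riccatiBlock HM HE KX + 1) * fromRows U V = 0 := by
  rw [riccatiBlock, ← fromBlocks_one, fromBlocks_add, fromBlocks_mul_fromRows, ← fromRows_zero]
  have hAB : (HM * KX * HMᴴ + 1)⁻¹ * (HM * KX * HMᴴ + 1) = 1 :=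
    nonsing_inv_mul _ ((isUnit_iff_isUnit_det _).mp hA)
  generalize (HM * KX * HMᴴ + 1)⁻¹ = B at hAB ⊢
  have hBU : B * (HM * (KX * (HMᴴ * U))) = U - B * U := by
    refine eq_sub_of_add_eq ?_
    simpa only [Matrix.mul_add, Matrix.add_mul, Matrix.mul_one, Matrix.one_mul, Matrix.mul_assoc]
      using congrArg (· * U) hAB
  congr 1 <;>
  · simp only [Matrix.add_mul, Matrix.sub_mul, Matrix.mul_sub, Matrix.neg_mul,
      Matrix.one_mul, Matrix.zero_mul, Matrix.mul_assoc, hUV, hBU]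
    abel

end Matrix

/-- With M the Riccati block matrix and H_E*H_E ≻ 0, for every matrix U₁ (with n_M
rows) the columns of the block vector (U₁; H_E(H_E*H_E)⁻¹H_M*U₁) lie in the kernel of
M + I. -/
theorem stmt_12 {n nM nE : ℕ}
    (HM : Matrix (Fin nM) (Fin n) ℂ) (HE : Matrix (Fin nE) (Fin n) ℂ)
    (KX : Matrix (Fin n) (Fin n) ℂ) (hK : KX.PosSemidef)
    (hE : (HEᴴ * HE).PosDef)
    (M : Matrix (Fin nM ⊕ Fin nE) (Fin nM ⊕ Fin nE) ℂ)
    (hM : M = fromBlocks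
      (-(HM * KX * HMᴴ + 1)⁻¹)
      (-(HM * KX * HMᴴ + 1)⁻¹ * (HM * KX * HEᴴ))
      (HE * KX * HMᴴ * (HM * KX * HMᴴ + 1)⁻¹)
      (-(HE * KX * HEᴴ) - 1 + HE * KX * HMᴴ * (HM * KX * HMᴴ + 1)⁻¹ * (HM * KX * HEᴴ)))
    (U₁ : Matrix (Fin nM) (Fin nM) ℂ) :
    (M + 1) * fromRows U₁ (HE * (HEᴴ * HE)⁻¹ * HMᴴ * U₁) = 0 := by
  subst hM
  have hA : (HM * KX * HMᴴ + 1).PosDef :=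
    PosDef.posSemidef_add (hK.mul_mul_conjTranspose_same HM) PosDef.one
  refine riccatiBlock_add_one_mul_fromRows_eq_zero hA.isUnit ?_
  rw [← Matrix.mul_assoc, ← Matrix.mul_assoc, ← Matrix.mul_assoc,
    mul_nonsing_inv _ ((isUnit_iff_isUnit_det _).mp hE.isUnit), Matrix.one_mul]
end

section
/- With M the Riccati block matrix (as above), for every n×n_M matrix U₂ the subspace spanned by the columns of (U₂; H_E(H_M*H_M)⁻¹H_M*U₂) is invariant under M, i.e., M·(U₂; H_E(H_M*H_M)⁻¹H_M*U₂) = (JU₂; H_E(H_M*H_M)⁻¹H_M*JU₂) for some matrix J (specifically J = −(H_MK_XH_M*+I)⁻¹(H_MK_XH_E*H_E(H_M*H_M)⁻¹H_M* + I), taking U₂ = I). -/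
open Matrix
open scoped ComplexOrder

/-- With M the Riccati block matrix, K_X ⪰ 0 and H_M*H_M ≻ 0, for every n×n_M...
matrix U₂ the span of the columns of (U₂; H_E(H_M*H_M)⁻¹H_M*U₂) is invariant under M:
M·(U₂; H_E(H_M*H_M)⁻¹H_M*U₂) = (JU₂; H_E(H_M*H_M)⁻¹H_M*JU₂) with
J = −(H_MK_XH_M*+I)⁻¹(H_MK_XH_E*H_E(H_M*H_M)⁻¹H_M* + I). -/
theorem stmt_14 {n nM nE : ℕ}
    (HM : Matrix (Fin nM) (Fin n) ℂ) (HE : Matrix (Fin nE) (Fin n) ℂ)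
    (KX : Matrix (Fin n) (Fin n) ℂ) (hK : KX.PosSemidef)
    (hM : (HMᴴ * HM).PosDef)
    (M : Matrix (Fin nM ⊕ Fin nE) (Fin nM ⊕ Fin nE) ℂ)
    (hMdef : M = fromBlocks
      (-(HM * KX * HMᴴ + 1)⁻¹)
      (-(HM * KX * HMᴴ + 1)⁻¹ * (HM * KX * HEᴴ))
      (HE * KX * HMᴴ * (HM * KX * HMᴴ + 1)⁻¹)
      (-(HE * KX * HEᴴ) - 1 + HE * KX * HMᴴ * (HM * KX * HMᴴ + 1)⁻¹ * (HM * KX * HEᴴ)))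
    (J : Matrix (Fin nM) (Fin nM) ℂ)
    (hJ : J = -(HM * KX * HMᴴ + 1)⁻¹ * (HM * KX * HEᴴ * HE * (HMᴴ * HM)⁻¹ * HMᴴ + 1)) :
    ∀ U₂ : Matrix (Fin nM) (Fin nM) ℂ,
      M * fromRows U₂ (HE * (HMᴴ * HM)⁻¹ * HMᴴ * U₂)
        = fromRows (J * U₂) (HE * (HMᴴ * HM)⁻¹ * HMᴴ * (J * U₂)) := by
  intro U₂
  have hA : (HM * KX * HMᴴ + 1).PosDef :=
    Matrix.PosDef.posSemidef_add (hK.mul_mul_conjTranspose_same HM) Matrix.PosDef.one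
  have hAA : (HM * KX * HMᴴ + 1) * (HM * KX * HMᴴ + 1)⁻¹ = 1 :=
    Matrix.mul_nonsing_inv _ ((Matrix.isUnit_iff_isUnit_det _).mp hA.isUnit)
  have hPH : HE * (HMᴴ * HM)⁻¹ * HMᴴ * HM = HE := by
    rw [Matrix.mul_assoc, Matrix.mul_assoc,
      Matrix.nonsing_inv_mul _ ((Matrix.isUnit_iff_isUnit_det _).mp hM.isUnit),
      Matrix.mul_one]
  have hEK : HE * KX = HE * (HMᴴ * HM)⁻¹ * HMᴴ * (HM * KX) := by
    conv_lhs => rw [← hPH]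
    rw [Matrix.mul_assoc]
  have h2 : ∀ Y : Matrix (Fin nM) (Fin nM) ℂ,
      HM * KX * HMᴴ * ((HM * KX * HMᴴ + 1)⁻¹ * Y)
        = Y - (HM * KX * HMᴴ + 1)⁻¹ * Y := by
    intro Y
    have h3 : HM * KX * HMᴴ * (HM * KX * HMᴴ + 1)⁻¹
        = 1 - (HM * KX * HMᴴ + 1)⁻¹ := by
      have h := hAA
      rw [Matrix.add_mul, Matrix.one_mul] at h
      rw [eq_sub_iff_add_eq]; exact h
    rw [← Matrix.mul_assoc, h3, Matrix.sub_mul, Matrix.one_mul]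
  subst hMdef hJ
  rw [fromBlocks_mul_fromRows, fromRows_ext_iff]
  constructor
  · simp only [Matrix.neg_mul, Matrix.mul_add, Matrix.add_mul, Matrix.mul_one,
      Matrix.mul_assoc, neg_add]
    abel
  · rw [hEK]
    simp only [Matrix.mul_assoc] at h2 ⊢
    simp only [Matrix.sub_mul, Matrix.add_mul, Matrix.neg_mul, Matrix.one_mul,
      Matrix.mul_add, Matrix.mul_neg, Matrix.mul_sub, Matrix.mul_one, Matrix.mul_assoc, h2]
    abel
end

section
/- Let K_X ⪰ 0 with det(K_X) = 0 (K_X singular), H_M*H_M ≻ 0. Then −1 is an eigenvalue of J = −(H_MK_XH_M*+I)⁻¹(H_MK_XH_E*H_E(H_M*H_M)⁻¹H_M* + I); indeed J + I = −(H_MK_XH_M*+I)⁻¹H_MK_X(H_E*H_E(H_M*H_M)⁻¹ − I)H_M*, which is singular when n_M ≥ n and K_X is singular. -/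
/-!
Since `K_X ⪰ 0`, `A = H_M K_X H_Mᴴ + I` is positive definite, so `J + I = A⁻¹ (A - B)` with `B`
the second factor of `J`, and `A - B` expands to the stated product. That product factors as
`(−A⁻¹ H_M) K_X ((H_Eᴴ H_E (H_Mᴴ H_M)⁻¹ − I) H_Mᴴ)`, so its rank is at most `rank K_X < n ≤ n_M`:
the `n_M × n_M` matrix `J + I` is singular.
-/

open Matrix
open scoped ComplexOrder

namespace Matrix

section Field

variable {m n K : Type*} [Fintype m] [Fintype n] [DecidableEq m] [Field K]

theorem rank_lt_card_of_det_eq_zero {A : Matrix m m K} (h : A.det = 0) :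
    A.rank < Fintype.card m := by
  obtain ⟨v, hv, hAv⟩ := exists_mulVec_eq_zero_iff.mpr h
  have hker : 0 < Module.finrank K (LinearMap.ker A.mulVecLin) :=
    Module.finrank_pos_iff.mpr ⟨⟨⟨v, hAv⟩, 0, fun h => hv (congrArg Subtype.val h)⟩⟩
  have hrank_nullity := LinearMap.finrank_range_add_finrank_ker A.mulVecLin
  rw [Module.finrank_fintype_fun_eq_card] at hrank_nullity
  show Module.finrank K (LinearMap.range A.mulVecLin) < _
  omega

theorem det_mul_mul_eq_zero_of_det_eq_zero [DecidableEq n] (P : Matrix m n K)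
    {A : Matrix n n K} (Q : Matrix n m K) (hA : A.det = 0)
    (hnm : Fintype.card n ≤ Fintype.card m) : (P * A * Q).det = 0 := by
  by_contra hdet
  have hfull := rank_of_det_ne_zero hdet
  have := calc (P * A * Q).rank ≤ (P * A).rank := rank_mul_le_left _ _
    _ ≤ A.rank := rank_mul_le_right _ _
    _ < Fintype.card n := rank_lt_card_of_det_eq_zero hA
  omega

end Field

theorem neg_nonsing_inv_mul_add_one {n R : Type*} [Fintype n] [DecidableEq n] [CommRing R]
    {A : Matrix n n R} (hA : IsUnit A.det) (B : Matrix n n R) :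
    -A⁻¹ * B + 1 = A⁻¹ * (A - B) := by
  rw [Matrix.mul_sub, nonsing_inv_mul A hA, Matrix.neg_mul]
  abel

end Matrix

theorem stmt_15_general {n nM nE : ℕ}
    (HM : Matrix (Fin nM) (Fin n) ℂ) (HE : Matrix (Fin nE) (Fin n) ℂ)
    (KX : Matrix (Fin n) (Fin n) ℂ) (hK : KX.PosSemidef) (hKsing : KX.det = 0)
    (J : Matrix (Fin nM) (Fin nM) ℂ)
    (hJ : J = -(HM * KX * HMᴴ + 1)⁻¹ * (HM * KX * HEᴴ * HE * (HMᴴ * HM)⁻¹ * HMᴴ + 1)) :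
    J + 1 = -(HM * KX * HMᴴ + 1)⁻¹ * (HM * KX *
        (HEᴴ * HE * (HMᴴ * HM)⁻¹ - 1) * HMᴴ) ∧
      (n ≤ nM → (J + 1).det = 0) := by
  have hunit : IsUnit (HM * KX * HMᴴ + 1).det :=
    (PosDef.posSemidef_add (hK.mul_mul_conjTranspose_same HM) PosDef.one).det_pos.ne'.isUnit
  have hJ1 : J + 1 = -(HM * KX * HMᴴ + 1)⁻¹ * (HM * KX *
      (HEᴴ * HE * (HMᴴ * HM)⁻¹ - 1) * HMᴴ) := by
    rw [hJ, neg_nonsing_inv_mul_add_one hunit, Matrix.neg_mul, ← Matrix.mul_neg]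
    congr 1
    simp only [Matrix.mul_sub, Matrix.sub_mul, Matrix.mul_one, Matrix.mul_assoc]
    abel
  refine ⟨hJ1, fun hn => ?_⟩
  have hfactor : J + 1 = (-(HM * KX * HMᴴ + 1)⁻¹ * HM) * KX *
      ((HEᴴ * HE * (HMᴴ * HM)⁻¹ - 1) * HMᴴ) := by
    rw [hJ1]
    simp only [Matrix.mul_assoc]
  rw [hfactor]
  exact det_mul_mul_eq_zero_of_det_eq_zero _ _ hKsing (by simpa using hn)

/-- Let K_X ⪰ 0 be singular and H_M*H_M ≻ 0, H_E*H_E ≻ 0. Then for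
J = −(H_MK_XH_M*+I)⁻¹(H_MK_XH_E*H_E(H_M*H_M)⁻¹H_M* + I) we have
J + I = −(H_MK_XH_M*+I)⁻¹H_MK_X(H_E*H_E(H_M*H_M)⁻¹ − I)H_M*, which is singular
when n_M ≥ n (so −1 is an eigenvalue of J). -/
theorem stmt_15 {n nM nE : ℕ}
    (HM : Matrix (Fin nM) (Fin n) ℂ) (HE : Matrix (Fin nE) (Fin n) ℂ)
    (KX : Matrix (Fin n) (Fin n) ℂ) (hK : KX.PosSemidef) (hKsing : KX.det = 0)
    (hM : (HMᴴ * HM).PosDef) (hE : (HEᴴ * HE).PosDef)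
    (J : Matrix (Fin nM) (Fin nM) ℂ)
    (hJ : J = -(HM * KX * HMᴴ + 1)⁻¹ * (HM * KX * HEᴴ * HE * (HMᴴ * HM)⁻¹ * HMᴴ + 1)) :
    J + 1 = -(HM * KX * HMᴴ + 1)⁻¹ * (HM * KX *
        (HEᴴ * HE * (HMᴴ * HM)⁻¹ - 1) * HMᴴ) ∧
      (n ≤ nM → (J + 1).det = 0) :=
  stmt_15_general HM HE KX hK hKsing J hJ
end

section
/- Let K_X = U_XU_X* with U_X an n×r matrix, B = (H_MK_XH_M* + I)⁻¹, and suppose A* satisfies A* = (H_E(H_M*H_M)⁻¹H_M*BH_MU_XV, H_E(H_E*H_E)⁻¹H_M*W)(BH_MU_XV, W)⁻¹ for matrices V (r×r invertible) and W (n_M×(n_M−r)) such that (BH_MU_XV, W) is invertible. Then A*H_MK_X = H_EK_X. -/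
open Matrix
open scoped ComplexOrder

/-!
Write `G = H_M U_X`, so that `H_M K_X H_M* + I = G G* + I`. The push-through identity
`(G G* + I)⁻¹ G = G (G* G + I)⁻¹` shows that the first block column `B G V` of the invertible
matrix `(B G V, W)` is `G T` with `T = (G* G + I)⁻¹ V` invertible. Multiplying the defining
equation of `A*` on the right by `(B G V, W)` and reading off the first block column gives
`A* G T = H_E (H_M* H_M)⁻¹ H_M* G T = H_E U_X T`; cancelling `T` gives `A* G = H_E U_X`, and
multiplying by `U_X*` gives the claim.
-/

namespace Matrix

variable {l m n o : Type*} [Fintype m] [Fintype n] [DecidableEq m] [DecidableEq n]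

/-- Push-through identity. No invertibility is needed: by the Weinstein–Aronszajn identity
both inverses are genuine or both are the junk value `0`. -/
theorem mul_add_one_inv_mul {R : Type*} [CommRing R] (A : Matrix m n R) (B : Matrix n m R) :
    (A * B + 1)⁻¹ * A = A * (B * A + 1)⁻¹ := by
  by_cases hBA : IsUnit (B * A + 1).det
  · have hAB : IsUnit (A * B + 1).det := by rwa [det_mul_add_one_comm]
    calc (A * B + 1)⁻¹ * A = (A * B + 1)⁻¹ * (A * (B * A + 1)) * (B * A + 1)⁻¹ := by
          rw [← Matrix.mul_assoc, mul_nonsing_inv_cancel_right _ _ hBA]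
      _ = (A * B + 1)⁻¹ * ((A * B + 1) * A) * (B * A + 1)⁻¹ := by
          simp only [Matrix.mul_add, Matrix.add_mul, Matrix.mul_assoc, Matrix.mul_one,
            Matrix.one_mul]
      _ = A * (B * A + 1)⁻¹ := by rw [nonsing_inv_mul_cancel_left _ _ hAB]
  · have hAB : ¬IsUnit (A * B + 1).det := by rwa [det_mul_add_one_comm]
    rw [nonsing_inv_apply_not_isUnit _ hBA, nonsing_inv_apply_not_isUnit _ hAB,
      Matrix.zero_mul, Matrix.mul_zero]

omit [DecidableEq m] in
theorem isUnit_conjTranspose_mul_self_add_one {𝕜 : Type*} [RCLike 𝕜] (G : Matrix m n 𝕜) :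
    IsUnit (Gᴴ * G + 1) :=
  (PosDef.posSemidef_add (posSemidef_conjTranspose_mul_self G) PosDef.one).isUnit

theorem fromCols_mul_mul_of_mul_fromCols_eq_one {R : Type*} [Semiring R] [Fintype o]
    {Y₁ : Matrix l m R} {Y₂ : Matrix l n R} {C : Matrix (m ⊕ n) o R}
    {X₁ : Matrix o m R} {X₂ : Matrix o n R} (hC : C * fromCols X₁ X₂ = 1) :
    fromCols Y₁ Y₂ * C * X₁ = Y₁ := by
  have h : fromCols Y₁ Y₂ * C * fromCols X₁ X₂ = fromCols Y₁ Y₂ := by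
    rw [Matrix.mul_assoc, hC, Matrix.mul_one]
  rw [mul_fromCols] at h
  exact (fromCols_inj.eq_iff.mp h).1

end Matrix

theorem stmt_16_general {n nM nE r : ℕ}
    (HM : Matrix (Fin nM) (Fin n) ℂ) (HE : Matrix (Fin nE) (Fin n) ℂ)
    (hM : (HMᴴ * HM).PosDef)
    (UX : Matrix (Fin n) (Fin r) ℂ)
    (KX : Matrix (Fin n) (Fin n) ℂ) (hKX : KX = UX * UXᴴ)
    (B : Matrix (Fin nM) (Fin nM) ℂ) (hB : B = (HM * KX * HMᴴ + 1)⁻¹)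
    (V : Matrix (Fin r) (Fin r) ℂ) (hV : IsUnit V)
    (W : Matrix (Fin nM) (Fin (nM - r)) ℂ)
    (C : Matrix (Fin r ⊕ Fin (nM - r)) (Fin nM) ℂ)
    (hC₂ : C * fromCols (B * HM * UX * V) W = 1)
    (Astar : Matrix (Fin nE) (Fin nM) ℂ)
    (hA : Astar = fromCols (HE * (HMᴴ * HM)⁻¹ * HMᴴ * B * HM * UX * V)
        (HE * (HEᴴ * HE)⁻¹ * HMᴴ * W) * C) :
    Astar * HM * KX = HE * KX := by
  obtain ⟨T, hT, hBG⟩ : ∃ T : Matrix (Fin r) (Fin r) ℂ, IsUnit T ∧ B * HM * UX * V = HM * UX * T := by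
    refine ⟨((HM * UX)ᴴ * (HM * UX) + 1)⁻¹ * V,
      (isUnit_nonsing_inv_iff.mpr (isUnit_conjTranspose_mul_self_add_one _)).mul hV, ?_⟩
    calc B * HM * UX * V = ((HM * UX) * (HM * UX)ᴴ + 1)⁻¹ * (HM * UX) * V := by
          rw [hB, hKX]; simp only [conjTranspose_mul, Matrix.mul_assoc]
      _ = HM * UX * (((HM * UX)ᴴ * (HM * UX) + 1)⁻¹ * V) := by
          rw [mul_add_one_inv_mul, Matrix.mul_assoc]
  have hcol : Astar * HM * UX * T = HE * UX * T := by
    have h := hA ▸ fromCols_mul_mul_of_mul_fromCols_eq_one hC₂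
    simp only [Matrix.mul_assoc] at h hBG ⊢
    rwa [hBG, ← Matrix.mul_assoc HMᴴ,
      nonsing_inv_mul_cancel_left _ _ (isUnit_iff_isUnit_det _ |>.mp hM.isUnit)] at h
  have := hT.invertible
  rw [Matrix.mul_left_inj_of_invertible] at hcol
  rw [hKX, ← Matrix.mul_assoc, hcol, Matrix.mul_assoc]

/-- Let K_X = U_XU_X*, B = (H_MK_XH_M* + I)⁻¹, and suppose
A* = (H_E(H_M*H_M)⁻¹H_M*BH_MU_XV, H_E(H_E*H_E)⁻¹H_M*W)(BH_MU_XV, W)⁻¹  for an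
invertible r×r matrix V and an n_M×(n_M−r) matrix W such that (BH_MU_XV, W) is
invertible (with inverse C). Then A*H_MK_X = H_EK_X. -/
theorem stmt_16 {n nM nE r : ℕ} (hr : r ≤ nM)
    (HM : Matrix (Fin nM) (Fin n) ℂ) (HE : Matrix (Fin nE) (Fin n) ℂ)
    (hM : (HMᴴ * HM).PosDef) (hE : (HEᴴ * HE).PosDef)
    (UX : Matrix (Fin n) (Fin r) ℂ)
    (KX : Matrix (Fin n) (Fin n) ℂ) (hKX : KX = UX * UXᴴ)
    (B : Matrix (Fin nM) (Fin nM) ℂ) (hB : B = (HM * KX * HMᴴ + 1)⁻¹)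
    (V : Matrix (Fin r) (Fin r) ℂ) (hV : IsUnit V)
    (W : Matrix (Fin nM) (Fin (nM - r)) ℂ)
    (C : Matrix (Fin r ⊕ Fin (nM - r)) (Fin nM) ℂ)
    (hC₁ : fromCols (B * HM * UX * V) W * C = 1)
    (hC₂ : C * fromCols (B * HM * UX * V) W = 1)
    (Astar : Matrix (Fin nE) (Fin nM) ℂ)
    (hA : Astar = fromCols (HE * (HMᴴ * HM)⁻¹ * HMᴴ * B * HM * UX * V)
        (HE * (HEᴴ * HE)⁻¹ * HMᴴ * W) * C) :
    Astar * HM * KX = HE * KX :=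
  stmt_16_general HM HE hM UX KX hKX B hB V hV W C hC₂ Astar hA
end
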